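/- arXiv:1401.0915 — 2 statements merged into one kernel-verified Lean document; each statement's English description precedes it below -/
import Mathlib

section
/- If K/k is a finite Galois extension with cyclic Galois group of order n, and c ∈ k^×, then the affine variety defined by Norm_{K/k}(Ξ) = c has a k-rational point if and only if c is a norm from K, if and only if the class of the cyclic algebra (K/k, c) is trivial in the Brauer group of k. -/
/-!
Put `N_i(x) = x σ(x) ⋯ σ^(i-1)(x)` (`partialNorm σ x i`), so that `N_n(x)` is the norm of `x`.
The relations `ξ^n = c`, `ξ ι(a) = ι(σ a) ξ` show that the `ι(a_i) ξ^i`, `i < n`, span `B`, and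
since `dim_k B = n²` the `k`-linear map `(a_i) ↦ ∑ ι(a_i) ξ^i` from `Kⁿ` is bijective. Hence
any pair `(j, η)` in a `k`-algebra satisfying the same relations defines an algebra map out of `B`.

If `c = N_n(x)`, multiplication by `K` together with `x·σ` satisfies them in `End_k K ≅ M_n(k)`;
the map `B → End_k K` sends `∑ ι(a_i) ξ^i` to `∑ a_i N_i(x) σ^i`, which vanishes only if all `a_i`
do, by Dedekind's independence of characters, so it is an isomorphism by dimension count.
Conversely, if `B ≅ M_n(k)`, then `kⁿ` is a `K`-vector space of dimension one via `ι`, on which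
`ξ` acts `σ`-semilinearly; so `ξ v = x v` for a basis vector `v`, and then
`c v = ξ^n v = N_n(x) v`.
-/

open Module

section CyclicAlgebra

variable {k K : Type*} [Field k] [Field K] [Algebra k K]

def partialNorm (σ : K ≃ₐ[k] K) (x : K) (i : ℕ) : K :=
  ∏ j ∈ Finset.range i, (σ ^ j) x

theorem partialNorm_succ (σ : K ≃ₐ[k] K) (x : K) (i : ℕ) :
    partialNorm σ x (i + 1) = x * σ (partialNorm σ x i) := by
  simp only [partialNorm, Finset.prod_range_succ', pow_zero, AlgEquiv.one_apply, map_prod,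
    pow_succ', AlgEquiv.mul_apply]
  ring

theorem partialNorm_ne_zero {σ : K ≃ₐ[k] K} {x : K} (hx : x ≠ 0) (i : ℕ) :
    partialNorm σ x i ≠ 0 :=
  Finset.prod_ne_zero_iff.mpr fun _ _ => (map_ne_zero _).mpr hx

theorem algebraMap_norm_eq_partialNorm [FiniteDimensional k K] [IsGalois k K]
    {σ : K ≃ₐ[k] K} (hσ : ∀ τ : K ≃ₐ[k] K, τ ∈ Subgroup.zpowers σ) (x : K) :
    algebraMap k K (Algebra.norm k x) = partialNorm σ x (orderOf σ) := by
  classical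
  rw [Algebra.norm_eq_prod_automorphisms, ← IsCyclic.image_range_orderOf hσ,
    Finset.prod_image fun i hi j hj hij => pow_injOn_Iio_orderOf (by simpa using hi)
      (by simpa using hj) hij]
  rfl

structure CyclicRelations {B : Type*} [Ring B] [Algebra k B] (n : ℕ) (σ : K ≃ₐ[k] K) (c : k)
    (ι : K →ₐ[k] B) (ξ : B) : Prop where
  pow_eq : ξ ^ n = algebraMap k B c
  mul_eq : ∀ a : K, ξ * ι a = ι (σ a) * ξ

section Pair

variable {A B : Type*} [Ring A] [Algebra k A] [Ring B] [Algebra k B]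

theorem pow_mul_eq_of_mul_eq {σ : K ≃ₐ[k] K} {ι : K →ₐ[k] B} {ξ : B}
    (h : ∀ a : K, ξ * ι a = ι (σ a) * ξ) (i : ℕ) (a : K) :
    ξ ^ i * ι a = ι ((σ ^ i) a) * ξ ^ i := by
  induction i generalizing a with
  | zero => simp
  | succ i ih =>
    rw [pow_succ, mul_assoc, h, ← mul_assoc, ih, mul_assoc, ← pow_succ, pow_succ σ]
    rfl

theorem mul_pow_eq_partialNorm {σ : K ≃ₐ[k] K} {ι : K →ₐ[k] B} {ξ : B}
    (h : ∀ a : K, ξ * ι a = ι (σ a) * ξ) (x : K) (i : ℕ) :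
    (ι x * ξ) ^ i = ι (partialNorm σ x i) * ξ ^ i := by
  induction i with
  | zero => simp [partialNorm]
  | succ i ih =>
    rw [pow_succ', ih, mul_assoc, ← mul_assoc ξ, h, partialNorm_succ, map_mul, pow_succ']
    simp only [mul_assoc]

theorem pow_apply_eq_partialNorm {V : Type*} [AddCommGroup V] [Module k V] {σ : K ≃ₐ[k] K}
    {ι : K →ₐ[k] Module.End k V} {η : Module.End k V}
    (h : ∀ a : K, η * ι a = ι (σ a) * η) {x : K} {v : V} (hv : η v = ι x v) (i : ℕ) :
    (η ^ i) v = ι (partialNorm σ x i) v := by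
  induction i with
  | zero => simp [partialNorm]
  | succ i ih =>
    rw [pow_succ', Module.End.mul_apply, ih, ← Module.End.mul_apply, h, Module.End.mul_apply, hv,
      partialNorm_succ, mul_comm, map_mul, Module.End.mul_apply]

namespace CyclicRelations

variable {n : ℕ} {σ : K ≃ₐ[k] K} {c : k} {ι : K →ₐ[k] B} {ξ : B}

theorem map (h : CyclicRelations n σ c ι ξ) (f : B →ₐ[k] A) :
    CyclicRelations n σ c (f.comp ι) (f ξ) where
  pow_eq := by rw [← map_pow, h.pow_eq, f.commutes]
  mul_eq a := by simp only [AlgHom.comp_apply, ← map_mul, h.mul_eq]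

theorem mul_pow_eq_mul_pow_mod (h : CyclicRelations n σ c ι ξ) (a : K) (m : ℕ) :
    ι a * ξ ^ m = ι (a * algebraMap k K c ^ (m / n)) * ξ ^ (m % n) := by
  conv_lhs => rw [← Nat.div_add_mod m n, pow_add, pow_mul, h.pow_eq]
  rw [map_mul, map_pow, ι.commutes, mul_assoc]

theorem mul_pow_mul_mul_pow (h : CyclicRelations n σ c ι ξ) (a b : K) (i l : ℕ) :
    ι a * ξ ^ i * (ι b * ξ ^ l) = ι (a * (σ ^ i) b) * ξ ^ (i + l) := by
  rw [mul_assoc, ← mul_assoc (ξ ^ i), pow_mul_eq_of_mul_eq h.mul_eq, map_mul, pow_add]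
  simp only [mul_assoc]

end CyclicRelations

variable (ι : K →ₐ[k] B) (ξ : B) (n : ℕ)

def monomialSum : (Fin n → K) →ₗ[k] B :=
  ∑ i : Fin n, LinearMap.mulRight k (ξ ^ (i : ℕ)) ∘ₗ ι.toLinearMap ∘ₗ LinearMap.proj i

theorem monomialSum_apply (a : Fin n → K) :
    monomialSum ι ξ n a = ∑ i, ι (a i) * ξ ^ (i : ℕ) := by
  simp [monomialSum]

theorem monomialSum_single (i : Fin n) (a : K) :
    monomialSum ι ξ n (Pi.single i a) = ι a * ξ ^ (i : ℕ) := by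
  classical
  rw [monomialSum_apply, Finset.sum_eq_single i (fun l _ hl => by simp [hl]) (by simp)]
  simp

variable {ι ξ n} {σ : K ≃ₐ[k] K} {c : k}

namespace CyclicRelations

theorem mul_pow_mem_range (h : CyclicRelations n σ c ι ξ) (hn : 0 < n) (a : K) (m : ℕ) :
    ι a * ξ ^ m ∈ LinearMap.range (monomialSum ι ξ n) := by
  rw [h.mul_pow_eq_mul_pow_mod]
  exact ⟨_, monomialSum_single ι ξ n ⟨m % n, Nat.mod_lt m hn⟩ _⟩

theorem range_monomialSum (h : CyclicRelations n σ c ι ξ) (hn : 0 < n)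
    (hgen : Algebra.adjoin k (Set.range ι ∪ {ξ}) = ⊤) :
    LinearMap.range (monomialSum ι ξ n) = ⊤ := by
  set S := LinearMap.range (monomialSum ι ξ n)
  have hgen_mul : ∀ z ∈ Set.range ι ∪ {ξ}, ∀ a m, z * (ι a * ξ ^ m) ∈ S := by
    rintro z (⟨b, rfl⟩ | rfl) a m
    · rw [← mul_assoc, ← map_mul]
      exact h.mul_pow_mem_range hn _ _
    · rw [← mul_assoc, h.mul_eq, mul_assoc, ← pow_succ']
      exact h.mul_pow_mem_range hn _ _
  have hmul : ∀ z : B, ∀ s ∈ S, z * s ∈ S := by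
    intro z
    induction (hgen ▸ Algebra.mem_top : z ∈ Algebra.adjoin k (Set.range ι ∪ {ξ})) using
      Algebra.adjoin_induction with
    | mem z hz =>
      rintro _ ⟨a, rfl⟩
      rw [monomialSum_apply, Finset.mul_sum]
      exact Submodule.sum_mem _ fun i _ => hgen_mul z hz _ _
    | algebraMap r => exact fun s hs => by rw [← Algebra.smul_def]; exact S.smul_mem r hs
    | add y z _ _ hy hz => exact fun s hs => by rw [add_mul]; exact S.add_mem (hy s hs) (hz s hs)
    | mul y z _ _ hy hz => exact fun s hs => by rw [mul_assoc]; exact hy _ (hz s hs)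
  refine eq_top_iff.mpr fun z _ => ?_
  have h1 : (1 : B) ∈ S := by
    simpa only [map_one, pow_zero, mul_one] using h.mul_pow_mem_range hn 1 0
  simpa using hmul z 1 h1

theorem bijective_monomialSum [FiniteDimensional k K] (h : CyclicRelations n σ c ι ξ)
    (hgen : Algebra.adjoin k (Set.range ι ∪ {ξ}) = ⊤) (hrank : finrank k K = n)
    (hdim : finrank k B = n ^ 2) : Function.Bijective (monomialSum ι ξ n) := by
  have hsurj := LinearMap.range_eq_top.mp (h.range_monomialSum (hrank ▸ finrank_pos) hgen)
  have := Module.Finite.of_surjective _ hsurj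
  have hfin : finrank k (Fin n → K) = finrank k B := by
    rw [finrank_pi_fintype, Finset.sum_const, Finset.card_univ, Fintype.card_fin, hrank, hdim,
      smul_eq_mul, sq]
  exact ⟨(LinearMap.injective_iff_surjective_of_finrank_eq_finrank hfin).mpr hsurj, hsurj⟩

theorem exists_algHom (hB : CyclicRelations n σ c ι ξ)
    (hbij : Function.Bijective (monomialSum ι ξ n)) (hn : 0 < n) {j : K →ₐ[k] A} {η : A}
    (hA : CyclicRelations n σ c j η) :
    ∃ Φ : B →ₐ[k] A, Φ.toLinearMap ∘ₗ monomialSum ι ξ n = monomialSum j η n := by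
  let Φ := monomialSum j η n ∘ₗ (LinearEquiv.ofBijective _ hbij).symm.toLinearMap
  have hΦ : ∀ a, Φ (monomialSum ι ξ n a) = monomialSum j η n a := fun a => by
    simp only [Φ, LinearMap.comp_apply, LinearEquiv.coe_coe,
      LinearEquiv.ofBijective_symm_apply_apply]
  have hmono : ∀ a m, Φ (ι a * ξ ^ m) = j a * η ^ m := fun a m => by
    rw [hB.mul_pow_eq_mul_pow_mod, hA.mul_pow_eq_mul_pow_mod,
      ← monomialSum_single ι ξ n ⟨m % n, Nat.mod_lt m hn⟩, hΦ, monomialSum_single]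
  have hone : Φ 1 = 1 := by simpa using hmono 1 0
  have hmul : ∀ y z, Φ (y * z) = Φ y * Φ z := by
    intro y z
    obtain ⟨a, rfl⟩ := hbij.2 y
    obtain ⟨b, rfl⟩ := hbij.2 z
    simp only [monomialSum_apply, Finset.sum_mul_sum, map_sum, hB.mul_pow_mul_mul_pow,
      hA.mul_pow_mul_mul_pow, hmono]
  exact ⟨AlgHom.ofLinearMap Φ hone hmul, LinearMap.ext hΦ⟩

end CyclicRelations

end Pair

section Endomorphisms

open Algebra

theorem AlgEquiv.toLinearMap_mul_lmul (σ : K ≃ₐ[k] K) (a : K) :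
    σ.toLinearMap * lmul k K a = lmul k K (σ a) * σ.toLinearMap :=
  LinearMap.ext fun w => by simp

variable {n : ℕ} {σ : K ≃ₐ[k] K} {c : k} {x : K}

theorem cyclicRelations_lmul_mul (hσ : σ ^ n = 1) (hx : partialNorm σ x n = algebraMap k K c) :
    CyclicRelations n σ c (lmul k K) (lmul k K x * σ.toLinearMap) where
  pow_eq := by
    rw [mul_pow_eq_partialNorm σ.toLinearMap_mul_lmul, ← AlgEquiv.pow_toLinearMap, hσ, hx,
      AlgHom.commutes]
    rfl
  mul_eq a := by
    rw [mul_assoc, σ.toLinearMap_mul_lmul, ← mul_assoc, ← map_mul, mul_comm, map_mul, mul_assoc]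

theorem injective_monomialSum_lmul_mul (hn : n ≤ orderOf σ) (hx : x ≠ 0) :
    Function.Injective (monomialSum (lmul k K) (lmul k K x * σ.toLinearMap) n) := by
  rw [injective_iff_map_eq_zero]
  intro a ha
  have hpow_inj : Function.Injective fun i : Fin n => ((σ ^ (i : ℕ) : K ≃ₐ[k] K) : K →ₐ[k] K) :=
    fun i l hil => Fin.ext <| pow_injOn_Iio_orderOf (lt_of_lt_of_le i.2 hn)
      (lt_of_lt_of_le l.2 hn) (AlgEquiv.coe_toAlgHom_injective hil)
  have hindep := (linearIndependent_algHom_toLinearMap k K K).comp _ hpow_inj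
  have hterm : ∀ i : Fin n, lmul k K (a i) * (lmul k K x * σ.toLinearMap) ^ (i : ℕ) =
      (a i * partialNorm σ x i) • ((σ ^ (i : ℕ) : K ≃ₐ[k] K) : K →ₐ[k] K).toLinearMap := by
    intro i
    rw [mul_pow_eq_partialNorm σ.toLinearMap_mul_lmul, ← AlgEquiv.pow_toLinearMap, ← mul_assoc,
      ← map_mul]
    rfl
  rw [monomialSum_apply] at ha
  simp only [hterm] at ha
  funext i
  exact (mul_eq_zero.mp (Fintype.linearIndependent_iff.mp hindep _ ha i)).resolve_right
    (partialNorm_ne_zero hx i)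

end Endomorphisms

section Criterion

variable {B : Type*} [Ring B] [Algebra k B] {n : ℕ} {σ : K ≃ₐ[k] K} {c : k}

theorem CyclicRelations.nonempty_algEquiv_end [FiniteDimensional k K] {ι : K →ₐ[k] B} {ξ : B}
    (hB : CyclicRelations n σ c ι ξ) (hbij : Function.Bijective (monomialSum ι ξ n))
    (hrank : finrank k K = n) (horder : orderOf σ = n) (hc : c ≠ 0) {x : K}
    (hx : partialNorm σ x n = algebraMap k K c) : Nonempty (B ≃ₐ[k] Module.End k K) := by
  have hn : 0 < n := hrank ▸ finrank_pos
  have hx0 : x ≠ 0 := by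
    rintro rfl
    refine hc ((algebraMap k K).injective ?_)
    rw [← hx, map_zero, partialNorm]
    exact Finset.prod_eq_zero (Finset.mem_range.mpr hn) (map_zero _)
  obtain ⟨Φ, hΦ⟩ := hB.exists_algHom hbij hn
    (cyclicRelations_lmul_mul (horder ▸ pow_orderOf_eq_one σ) hx)
  have hinj : Function.Injective Φ := by
    refine Function.Injective.of_comp_right ?_ hbij.2
    have := congrArg DFunLike.coe hΦ
    rw [LinearMap.coe_comp, AlgHom.coe_toLinearMap] at this
    exact this ▸ injective_monomialSum_lmul_mul horder.ge hx0
  have := Module.Finite.equiv (LinearEquiv.ofBijective _ hbij)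
  have hfin : finrank k B = finrank k (Module.End k K) := by
    rw [← LinearEquiv.finrank_eq (LinearEquiv.ofBijective _ hbij), finrank_linearMap,
      finrank_pi_fintype, Finset.sum_const, Finset.card_univ, Fintype.card_fin, hrank, smul_eq_mul]
  exact ⟨AlgEquiv.ofBijective Φ ⟨hinj,
    (LinearMap.injective_iff_surjective_of_finrank_eq_finrank hfin (f := Φ.toLinearMap)).mp hinj⟩⟩

theorem CyclicRelations.exists_partialNorm_eq [FiniteDimensional k K] {V : Type*}
    [AddCommGroup V] [Module k V] (hV : finrank k V = finrank k K) {ι : K →ₐ[k] Module.End k V}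
    {η : Module.End k V} (h : CyclicRelations n σ c ι η) :
    ∃ x, partialNorm σ x n = algebraMap k K c := by
  let : Module K V := Module.compHom V ι.toRingHom
  have : IsScalarTower k K V := ⟨fun r a v => by
    change ι (r • a) v = r • ι a v
    rw [map_smul, LinearMap.smul_apply]⟩
  have hV1 : finrank K V = 1 := by
    have := Module.finrank_mul_finrank k K V
    rw [hV] at this
    exact (Nat.mul_eq_left finrank_pos.ne').mp this
  obtain ⟨v, hv0, hv⟩ := finrank_eq_one_iff'.mp hV1
  obtain ⟨x, hx⟩ := hv (η v)
  have hpow := pow_apply_eq_partialNorm h.mul_eq hx.symm n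
  rw [h.pow_eq, ← ι.commutes] at hpow
  exact ⟨x, smul_left_injective K hv0 hpow.symm⟩

end Criterion

end CyclicAlgebra

theorem normEquation_hasPoint_iff_cyclicAlgebra_trivial_general
    {k K : Type*} [Field k] [Field K] [Algebra k K] [IsGalois k K]
    (n : ℕ) (hn : 0 < n) (hrank : Module.finrank k K = n)
    (σ : K ≃ₐ[k] K) (hσ : ∀ τ : K ≃ₐ[k] K, τ ∈ Subgroup.zpowers σ)
    (c : k) (hc : c ≠ 0)
    (B : Type*) [Ring B] [Algebra k B]
    (ι : K →ₐ[k] B) (ξ : B)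
    (hξ : ξ ^ n = algebraMap k B c)
    (hcomm : ∀ a : K, ξ * ι a = ι (σ a) * ξ)
    (hgen : Algebra.adjoin k (Set.range ⇑ι ∪ {ξ}) = ⊤)
    (hdim : Module.finrank k B = n ^ 2) :
    (∃ x : K, Algebra.norm k x = c) ↔ Nonempty (B ≃ₐ[k] Matrix (Fin n) (Fin n) k) := by
  have : FiniteDimensional k K := .of_finrank_pos (hrank ▸ hn)
  have horder : orderOf σ = n := by
    rw [orderOf_eq_card_of_forall_mem_zpowers hσ, IsGalois.card_aut_eq_finrank, hrank]
  have hB : CyclicRelations n σ c ι ξ := ⟨hξ, hcomm⟩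
  have hnorm : ∀ x : K, Algebra.norm k x = c ↔ partialNorm σ x n = algebraMap k K c := fun x => by
    rw [← horder, ← algebraMap_norm_eq_partialNorm hσ, (algebraMap k K).injective.eq_iff]
  simp_rw [hnorm]
  constructor
  · rintro ⟨x, hx⟩
    obtain ⟨Φ⟩ := hB.nonempty_algEquiv_end (hB.bijective_monomialSum hgen hrank hdim) hrank
      horder hc hx
    exact ⟨Φ.trans (LinearMap.toMatrixAlgEquiv (finBasisOfFinrankEq k K hrank))⟩
  · rintro ⟨ψ⟩
    exact (hB.map (Matrix.toLinAlgEquiv'.toAlgHom.comp ψ.toAlgHom)).exists_partialNorm_eq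
      (by rw [finrank_fin_fun, hrank])

/-- Let `K/k` be a finite Galois extension with cyclic Galois group of order `n`, generated
by `σ`, and let `c ∈ k^×`.  Let `B` be the cyclic algebra `(K/k, σ, c)`: the `k`-algebra
generated by (a copy of) `K` and an element `ξ` with `ξ^n = c` and `ξ·λ = σ(λ)·ξ` for
`λ ∈ K`, of dimension `n²`.  Then the affine variety `Norm_{K/k}(Ξ) = c` has a `k`-rational
point — i.e. `c` is a norm from `K` — if and only if the class of the cyclic algebra
`(K/k, σ, c)` is trivial in the Brauer group of `k`, i.e. `B` is a matrix algebra. -/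
theorem normEquation_hasPoint_iff_cyclicAlgebra_trivial
    {k K : Type*} [Field k] [Field K] [Algebra k K] [IsGalois k K]
    (n : ℕ) (hn : 0 < n) (hrank : Module.finrank k K = n)
    (σ : K ≃ₐ[k] K) (hσ : ∀ τ : K ≃ₐ[k] K, τ ∈ Subgroup.zpowers σ)
    (c : k) (hc : c ≠ 0)
    (B : Type*) [Ring B] [Algebra k B]
    (ι : K →ₐ[k] B) (hι : Function.Injective ι) (ξ : B)
    (hξ : ξ ^ n = algebraMap k B c)
    (hcomm : ∀ a : K, ξ * ι a = ι (σ a) * ξ)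
    (hgen : Algebra.adjoin k (Set.range ⇑ι ∪ {ξ}) = ⊤)
    (hdim : Module.finrank k B = n ^ 2) :
    (∃ x : K, Algebra.norm k x = c) ↔ Nonempty (B ≃ₐ[k] Matrix (Fin n) (Fin n) k) :=
  normEquation_hasPoint_iff_cyclicAlgebra_trivial_general n hn hrank σ hσ c hc B ι ξ hξ hcomm hgen
    hdim
end

section
/- Let F be a field containing a primitive n-th root of unity ζ, with n invertible in F, and let b ∈ F^×. Then F[t]/(t^n − b) with the F-algebra automorphism t ↦ ζt is a cyclic extension (Galois Z/n-algebra) of F, and for c ∈ F^×, the cyclic algebra attached to this extension and c equals the symbol algebra (b,c)_ζ. -/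
/-- The defining relations of the symbol algebra `(b,c)_ζ`: it is generated by `u, v`
with `uⁿ = b`, `vⁿ = c`, `v·u = ζ·u·v`. -/
inductive SymbolRel (F : Type*) [Field F] (n : ℕ) (ζ b c : F) :
    FreeAlgebra F (Fin 2) → FreeAlgebra F (Fin 2) → Prop
  | u : SymbolRel F n ζ b c ((FreeAlgebra.ι F (0 : Fin 2)) ^ n) (algebraMap F _ b)
  | v : SymbolRel F n ζ b c ((FreeAlgebra.ι F (1 : Fin 2)) ^ n) (algebraMap F _ c)
  | comm : SymbolRel F n ζ b c (FreeAlgebra.ι F (1 : Fin 2) * FreeAlgebra.ι F (0 : Fin 2))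
      (algebraMap F _ ζ * (FreeAlgebra.ι F (0 : Fin 2) * FreeAlgebra.ι F (1 : Fin 2)))

/-- The symbol algebra `(b,c)_ζ` over `F`. -/
abbrev SymbolAlgebra (F : Type*) [Field F] (n : ℕ) (ζ b c : F) : Type _ :=
  RingQuot (SymbolRel F n ζ b c)

/-!
The automorphism `σ : t ↦ ζ t` of `A = F[t]/(tⁿ - b)` is the Kummer automorphism
`autAdjoinRootXPowSubC` at `ζ`. The power basis `1, t, …, tⁿ⁻¹` consists of eigenvectors of `σ`
with the pairwise distinct eigenvalues `ζⁱ`, so `σ` has order `n` and fixes only the scalars.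

In a cyclic algebra `B` for `(A, σ, c)`, the elements `x = ι t` and `ξ` satisfy the defining
relations of `(b,c)_ζ` and generate `B`, so the universal property gives a surjection
`(b,c)_ζ → B`. The monomials `uⁱ vʲ` with `i, j < n` span `(b,c)_ζ`, hence
`dim (b,c)_ζ ≤ n² = dim B` and the surjection is an isomorphism.
-/

theorem pow_mul_pow_eq_smul_of_mul_eq_smul {R A : Type*} [CommSemiring R] [Semiring A]
    [Algebra R A] {x y : A} {q : R} (h : y * x = q • (x * y)) (j k : ℕ) :
    y ^ j * x ^ k = q ^ (j * k) • (x ^ k * y ^ j) := by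
  have hy_mul_pow : ∀ k : ℕ, y * x ^ k = q ^ k • (x ^ k * y) := by
    have hsemi : SemiconjBy y x (q • x) := by rw [SemiconjBy, smul_mul_assoc, h]
    intro k
    rw [(hsemi.pow_right k).eq, smul_pow, smul_mul_assoc]
  induction j with
  | zero => simp
  | succ j ih =>
    rw [pow_succ', mul_assoc, ih, mul_smul_comm, ← mul_assoc, hy_mul_pow, smul_mul_assoc,
      smul_smul, mul_assoc, ← pow_succ', ← pow_add, Nat.succ_mul, add_comm (j * k)]

theorem pow_eq_smul_pow_mod {R A : Type*} [CommSemiring R] [Semiring A] [Algebra R A]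
    {x : A} {n : ℕ} {r : R} (hx : x ^ n = algebraMap R A r) (m : ℕ) :
    x ^ m = r ^ (m / n) • x ^ (m % n) := by
  conv_lhs => rw [← Nat.div_add_mod m n]
  rw [pow_add, pow_mul, hx, ← map_pow, ← Algebra.smul_def]

namespace SymbolAlgebra

variable {F : Type*} [Field F] {n : ℕ} {ζ b c : F}

variable (F n ζ b c) in
noncomputable def u : SymbolAlgebra F n ζ b c :=
  RingQuot.mkAlgHom F (SymbolRel F n ζ b c) (FreeAlgebra.ι F 0)

variable (F n ζ b c) in
noncomputable def v : SymbolAlgebra F n ζ b c :=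
  RingQuot.mkAlgHom F (SymbolRel F n ζ b c) (FreeAlgebra.ι F 1)

local notation "U" => u F n ζ b c
local notation "V" => v F n ζ b c

lemma u_pow : U ^ n = algebraMap F _ b := by
  simpa [u, map_pow] using RingQuot.mkAlgHom_rel F (SymbolRel.u : SymbolRel F n ζ b c _ _)

lemma v_pow : V ^ n = algebraMap F _ c := by
  simpa [v, map_pow] using RingQuot.mkAlgHom_rel F (SymbolRel.v : SymbolRel F n ζ b c _ _)

lemma v_mul_u : V * U = ζ • (U * V) := by
  simpa [u, v, map_mul, Algebra.smul_def] using
    RingQuot.mkAlgHom_rel F (SymbolRel.comm : SymbolRel F n ζ b c _ _)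

lemma adjoin_u_v : Algebra.adjoin F {U, V} = ⊤ := by
  have himage : RingQuot.mkAlgHom F (SymbolRel F n ζ b c) '' Set.range (FreeAlgebra.ι F) =
      {U, V} := by
    rw [← Set.range_comp]
    ext x
    simp [Fin.exists_fin_two, u, v, eq_comm]
  rw [← himage, ← AlgHom.map_adjoin, FreeAlgebra.adjoin_range_ι, Algebra.map_top,
    AlgHom.range_eq_top]
  exact RingQuot.mkAlgHom_surjective F _

lemma span_u_pow_mul_v_pow (hn : 0 < n) :
    Submodule.span F (Set.range fun p : Fin n × Fin n => U ^ (p.1 : ℕ) * V ^ (p.2 : ℕ)) = ⊤ := by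
  set M := Submodule.span F (Set.range fun p : Fin n × Fin n => U ^ (p.1 : ℕ) * V ^ (p.2 : ℕ))
  have hmem (i j : ℕ) : U ^ i * V ^ j ∈ M := by
    rw [pow_eq_smul_pow_mod u_pow, pow_eq_smul_pow_mod v_pow, smul_mul_smul_comm]
    exact M.smul_mem _ (Submodule.subset_span
      ⟨(⟨i % n, Nat.mod_lt _ hn⟩, ⟨j % n, Nat.mod_lt _ hn⟩), rfl⟩)
  have hmul : M * M ≤ M := by
    rw [Submodule.span_mul_span, Submodule.span_le]
    rintro _ ⟨_, ⟨p, rfl⟩, _, ⟨q, rfl⟩, rfl⟩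
    dsimp only
    rw [SetLike.mem_coe, mul_assoc, ← mul_assoc (V ^ (p.2 : ℕ)),
      pow_mul_pow_eq_smul_of_mul_eq_smul v_mul_u, smul_mul_assoc, mul_smul_comm, mul_assoc,
      ← pow_add, ← mul_assoc, ← pow_add]
    exact M.smul_mem _ (hmem _ _)
  have hsub : M.toSubalgebra (by simpa using hmem 0 0)
      (fun x y hx hy => hmul (Submodule.mul_mem_mul hx hy)) = ⊤ := by
    rw [eq_top_iff, ← adjoin_u_v, Algebra.adjoin_le_iff, Set.insert_subset_iff,
      Set.singleton_subset_iff]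
    exact ⟨by simpa using hmem 1 0, by simpa using hmem 0 1⟩
  simpa using congrArg Subalgebra.toSubmodule hsub

lemma finite_of_pos (hn : 0 < n) : Module.Finite F (SymbolAlgebra F n ζ b c) :=
  ⟨Submodule.fg_def.mpr ⟨_, Set.finite_range _, span_u_pow_mul_v_pow hn⟩⟩

lemma finrank_le_sq (hn : 0 < n) : Module.finrank F (SymbolAlgebra F n ζ b c) ≤ n ^ 2 := by
  simpa [sq] using finrank_le_of_span_eq_top (span_u_pow_mul_v_pow (ζ := ζ) (b := b) (c := c) hn)

variable {B : Type*} [Ring B] [Algebra F B]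

noncomputable def lift (x y : B) (hx : x ^ n = algebraMap F B b) (hy : y ^ n = algebraMap F B c)
    (hyx : y * x = ζ • (x * y)) : SymbolAlgebra F n ζ b c →ₐ[F] B :=
  RingQuot.liftAlgHom F ⟨FreeAlgebra.lift F ![x, y], fun _ _ h => by
    cases h <;> simp [hx, hy, hyx, Algebra.smul_def]⟩

section lift

variable {x y : B} (hx : x ^ n = algebraMap F B b) (hy : y ^ n = algebraMap F B c)
  (hyx : y * x = ζ • (x * y))

lemma lift_u : lift x y hx hy hyx U = x := by
  simp [lift, u]

lemma lift_v : lift x y hx hy hyx V = y := by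
  simp [lift, v]

lemma range_lift : (lift x y hx hy hyx).range = Algebra.adjoin F {x, y} := by
  rw [← Algebra.map_top, ← adjoin_u_v, AlgHom.map_adjoin, Set.image_pair, lift_u, lift_v]

end lift

theorem nonempty_algEquiv_of_adjoin_eq_top {x y : B} (hn : 0 < n) (hx : x ^ n = algebraMap F B b)
    (hy : y ^ n = algebraMap F B c) (hyx : y * x = ζ • (x * y))
    (hxy : Algebra.adjoin F {x, y} = ⊤) (hB : Module.finrank F B = n ^ 2) :
    Nonempty (B ≃ₐ[F] SymbolAlgebra F n ζ b c) := by
  have := finite_of_pos (ζ := ζ) (b := b) (c := c) hn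
  set φ := lift x y hx hy hyx
  have hsurj : Function.Surjective φ := by
    rw [← AlgHom.range_eq_top, range_lift, hxy]
  have := Module.Finite.of_surjective φ.toLinearMap hsurj
  have hrank : Module.finrank F (SymbolAlgebra F n ζ b c) = Module.finrank F B :=
    le_antisymm (hB ▸ finrank_le_sq hn)
      (LinearMap.finrank_le_finrank_of_surjective (f := φ.toLinearMap) hsurj)
  have hinj : Function.Injective φ :=
    (LinearMap.injective_iff_surjective_of_finrank_eq_finrank (f := φ.toLinearMap) hrank).mpr hsurj
  exact ⟨(AlgEquiv.ofBijective φ ⟨hinj, hsurj⟩).symm⟩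

end SymbolAlgebra

open Polynomial AdjoinRoot

lemma autAdjoinRootXPowSubC_injective {K : Type*} [Field K] {n : ℕ} (hn : 0 < n) (a : K) :
    Function.Injective (autAdjoinRootXPowSubC n a) := by
  rw [injective_iff_map_eq_one]
  intro η hη
  obtain h1 | rfl := Nat.lt_or_eq_of_le hn
  · have hfix : ((η : Kˣ) : K) • root (X ^ n - C a) = (1 : K) • root (X ^ n - C a) := by
      rw [← autAdjoinRootXPowSubC_root, hη, one_smul, AlgEquiv.one_apply]
    ext
    exact smul_left_injective K (root_X_pow_sub_C_ne_zero h1 a) hfix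
  · exact Subsingleton.elim _ _

lemma orderOf_autAdjoinRootXPowSubC {K : Type*} [Field K] {n : ℕ} [NeZero n] {ζ : K}
    (hζ : IsPrimitiveRoot ζ n) (a : K) :
    orderOf (autAdjoinRootXPowSubC n a hζ.toRootsOfUnity) = n := by
  have hζ' : IsPrimitiveRoot hζ.toRootsOfUnity n :=
    IsPrimitiveRoot.coe_submonoidClass_iff.mp (IsPrimitiveRoot.coe_units_iff.mp hζ)
  rw [orderOf_injective _ (autAdjoinRootXPowSubC_injective (NeZero.pos n) a), ← hζ'.eq_orderOf]

theorem PowerBasis.mem_range_algebraMap_of_apply_eq_self {K S : Type*} [Field K] [Ring S]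
    [Algebra K S] (pb : PowerBasis K S) (σ : S →ₐ[K] S) {s : K} (hσ : σ pb.gen = s • pb.gen)
    (hs : ∀ i, 0 < i → i < pb.dim → s ^ i ≠ 1) {x : S} (hx : σ x = x) :
    x ∈ Set.range (algebraMap K S) := by
  have hσbasis (i : Fin pb.dim) : σ (pb.basis i) = s ^ (i : ℕ) • pb.basis i := by
    rw [pb.basis_eq_pow, map_pow, hσ, _root_.smul_pow]
  have hcoord (i : Fin pb.dim) : s ^ (i : ℕ) * pb.basis.repr x i = pb.basis.repr x i := by
    have hσx : σ x = ∑ j : Fin pb.dim, (s ^ (j : ℕ) * pb.basis.repr x j) • pb.basis j := by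
      conv_lhs => rw [← pb.basis.sum_repr x]
      simp only [map_sum, map_smul, hσbasis, smul_smul, mul_comm]
    conv_rhs => rw [← hx, hσx, Module.Basis.repr_sum_self]
  rw [← Algebra.mem_bot, ← pb.basis.sum_repr x]
  refine Subalgebra.sum_mem _ fun j _ => ?_
  by_cases hj : (j : ℕ) = 0
  · rw [pb.basis_eq_pow, hj, pow_zero]
    exact Subalgebra.smul_mem _ (one_mem _) _
  · have hsj : s ^ (j : ℕ) - 1 ≠ 0 := sub_ne_zero.mpr (hs j (Nat.pos_of_ne_zero hj) j.isLt)
    have hzero : pb.basis.repr x j = 0 :=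
      (mul_eq_zero.mp (by linear_combination hcoord j)).resolve_left hsj
    rw [hzero, zero_smul]
    exact zero_mem _

lemma mem_range_algebraMap_of_autAdjoinRootXPowSubC_apply_eq_self {K : Type*} [Field K] {n : ℕ}
    [NeZero n] {ζ : K} (hζ : IsPrimitiveRoot ζ n) (a : K) {x : AdjoinRoot (X ^ n - C a)}
    (hx : autAdjoinRootXPowSubC n a hζ.toRootsOfUnity x = x) :
    x ∈ Set.range (algebraMap K (AdjoinRoot (X ^ n - C a))) := by
  refine (powerBasis' (monic_X_pow_sub_C a (NeZero.ne n))).mem_range_algebraMap_of_apply_eq_self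
    (autAdjoinRootXPowSubC n a hζ.toRootsOfUnity).toAlgHom (s := ζ) ?_ ?_ hx
  · exact autAdjoinRootXPowSubC_root a _
  · intro i hi0 hin
    rw [powerBasis'_dim, natDegree_X_pow_sub_C] at hin
    exact hζ.pow_ne_one_of_pos_of_lt hi0.ne' hin

lemma AdjoinRoot.adjoin_range_union_eq {R B : Type*} [CommRing R] [Semiring B] [Algebra R B]
    (f : R[X]) (ι : AdjoinRoot f →ₐ[R] B) (s : Set B) :
    Algebra.adjoin R (Set.range ι ∪ s) = Algebra.adjoin R (insert (ι (root f)) s) := by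
  have hrange : ι.range = Algebra.adjoin R {ι (root f)} := by
    rw [← Algebra.map_top, ← adjoinRoot_eq_top, AlgHom.map_adjoin, Set.image_singleton]
  refine le_antisymm (Algebra.adjoin_le (Set.union_subset ?_ ?_)) (Algebra.adjoin_mono ?_)
  · rintro _ ⟨a, rfl⟩
    have ha : ι a ∈ ι.range := ⟨a, rfl⟩
    rw [hrange] at ha
    exact Algebra.adjoin_mono (Set.singleton_subset_iff.mpr (Set.mem_insert _ _)) ha
  · exact (Set.subset_insert _ _).trans Algebra.subset_adjoin
  · exact Set.insert_subset (Or.inl ⟨root f, rfl⟩) Set.subset_union_right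

theorem adjoinRoot_cyclic_and_cyclicAlgebra_eq_symbolAlgebra_general
    (F : Type*) [Field F] (n : ℕ) (hn : 0 < n)
    (ζ : F) (hζ : IsPrimitiveRoot ζ n) (b : F) (c : F) :
    ∃ σ : AdjoinRoot (Polynomial.X ^ n - Polynomial.C b) ≃ₐ[F]
          AdjoinRoot (Polynomial.X ^ n - Polynomial.C b),
      σ (AdjoinRoot.root _) = algebraMap F _ ζ * AdjoinRoot.root _ ∧
      orderOf σ = n ∧
      (∀ a, σ a = a → a ∈ (algebraMap F (AdjoinRoot (Polynomial.X ^ n - Polynomial.C b))).range) ∧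
      ∀ (B : Type*) (_ : Ring B) (_ : Algebra F B)
        (ι : AdjoinRoot (Polynomial.X ^ n - Polynomial.C b) →ₐ[F] B)
        (_ : Function.Injective ι) (ξ : B),
        ξ ^ n = algebraMap F B c →
        (∀ a, ξ * ι a = ι (σ a) * ξ) →
        Algebra.adjoin F (Set.range ⇑ι ∪ {ξ}) = ⊤ →
        Module.finrank F B = n ^ 2 →
        Nonempty (B ≃ₐ[F] SymbolAlgebra F n ζ b c) := by
  have : NeZero n := ⟨hn.ne'⟩
  set σ := autAdjoinRootXPowSubC n b hζ.toRootsOfUnity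
  have hσ : σ (root _) = algebraMap F _ ζ * root _ := by
    rw [autAdjoinRootXPowSubC_root, Algebra.smul_def]
    rfl
  refine ⟨σ, hσ, orderOf_autAdjoinRootXPowSubC hζ b,
    fun _ => mem_range_algebraMap_of_autAdjoinRootXPowSubC_apply_eq_self hζ b, ?_⟩
  intro B _ _ ι _ ξ hξ hξι hadj hB
  refine SymbolAlgebra.nonempty_algEquiv_of_adjoin_eq_top (x := ι (root _)) hn ?_ hξ ?_ ?_ hB
  · rw [← map_pow, root_X_pow_sub_C_pow, ← AdjoinRoot.algebraMap_eq, AlgHom.commutes]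
  · rw [hξι, hσ, map_mul, AlgHom.commutes, mul_assoc, Algebra.smul_def]
  · rw [← hadj, AdjoinRoot.adjoin_range_union_eq]

/-- Let `F` contain a primitive `n`-th root of unity `ζ`, with `n` invertible in `F`, and
let `b ∈ F^×`.  Then `A = F[t]/(tⁿ − b)` with the automorphism `t ↦ ζt` is a cyclic
(Galois `ℤ/n`-) algebra over `F`: there is an `F`-algebra automorphism `σ` with
`σ(t) = ζ·t`, of order `n`, whose fixed subalgebra is `F`; and for `c ∈ F^×` the cyclic
algebra attached to `(A, σ)` and `c` — any `F`-algebra `B` generated by a copy `ι(A)` of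
`A` together with `ξ` satisfying `ξⁿ = c`, `ξ·ι(a) = ι(σ a)·ξ`, of dimension `n²` — is
isomorphic to the symbol algebra `(b,c)_ζ`. -/
theorem adjoinRoot_cyclic_and_cyclicAlgebra_eq_symbolAlgebra
    (F : Type*) [Field F] (n : ℕ) (hn : 0 < n) (hn' : (n : F) ≠ 0)
    (ζ : F) (hζ : IsPrimitiveRoot ζ n) (b : F) (hb : b ≠ 0) (c : F) (hc : c ≠ 0) :
    ∃ σ : AdjoinRoot (Polynomial.X ^ n - Polynomial.C b) ≃ₐ[F]
          AdjoinRoot (Polynomial.X ^ n - Polynomial.C b),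
      σ (AdjoinRoot.root _) = algebraMap F _ ζ * AdjoinRoot.root _ ∧
      orderOf σ = n ∧
      (∀ a, σ a = a → a ∈ (algebraMap F (AdjoinRoot (Polynomial.X ^ n - Polynomial.C b))).range) ∧
      ∀ (B : Type*) (_ : Ring B) (_ : Algebra F B)
        (ι : AdjoinRoot (Polynomial.X ^ n - Polynomial.C b) →ₐ[F] B)
        (_ : Function.Injective ι) (ξ : B),
        ξ ^ n = algebraMap F B c →
        (∀ a, ξ * ι a = ι (σ a) * ξ) →
        Algebra.adjoin F (Set.range ⇑ι ∪ {ξ}) = ⊤ →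
        Module.finrank F B = n ^ 2 →
        Nonempty (B ≃ₐ[F] SymbolAlgebra F n ζ b c) :=
  adjoinRoot_cyclic_and_cyclicAlgebra_eq_symbolAlgebra_general F n hn ζ hζ b c
end
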